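/- If G is a finite connected simple graph and n ≥ 1, then gp(G ⊠ K_n) = n · gp(G), where G ⊠ K_n denotes the strong product of G with the complete graph K_n. -/

import Mathlib

open SimpleGraph

variable {V W : Type*}

/-- `S` is a general position set of `G`: no three pairwise distinct vertices of `S`
lie on a common shortest path, i.e. no `v ∈ S` lies strictly between `u, w ∈ S`. -/
def IsGPSet (G : SimpleGraph V) (S : Set V) : Prop :=
  ∀ u ∈ S, ∀ v ∈ S, ∀ w ∈ S, u ≠ v → v ≠ w → u ≠ w →
    ¬(G.Reachable u w ∧ G.dist u v + G.dist v w = G.dist u w)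

/-- The general position number of `G`. -/
noncomputable def gpNum (G : SimpleGraph V) [Fintype V] : ℕ :=
  sSup {n | ∃ S : Finset V, IsGPSet G ↑S ∧ S.card = n}

/-- The strong product `G ⊠ H`. -/
def strongProd (G : SimpleGraph V) (H : SimpleGraph W) : SimpleGraph (V × W) where
  Adj x y := x ≠ y ∧ (x.1 = y.1 ∨ G.Adj x.1 y.1) ∧ (x.2 = y.2 ∨ H.Adj x.2 y.2)
  symm := by
    constructor
    rintro x y ⟨hxy, h1, h2⟩
    refine ⟨hxy.symm, ?_, ?_⟩
    · exact h1.imp Eq.symm (fun h => G.adj_symm h)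
    · exact h2.imp Eq.symm (fun h => H.adj_symm h)
  loopless := by
    constructor
    rintro x ⟨hxx, -⟩
    exact hxx rfl

section Aux

variable {n : ℕ} {G : SimpleGraph V}

private lemma sp_walk_dist_le (hG : G.Connected) {x y : V × Fin n}
    (W : (strongProd G (completeGraph (Fin n))).Walk x y) :
    G.dist x.1 y.1 ≤ W.length := by
  induction W with
  | nil => simp
  | @cons a b c h W ih =>
    obtain ⟨-, h1, -⟩ := h
    show G.dist a.1 c.1 ≤ W.length + 1
    rcases h1 with heq | hadj
    · rw [heq]; omega
    · have h2 : G.dist a.1 b.1 = 1 := SimpleGraph.dist_eq_one_iff_adj.mpr hadj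
      have := hG.dist_triangle (u := a.1) (v := b.1) (w := c.1)
      omega

private def homSnd (G : SimpleGraph V) (n : ℕ) (j : Fin n) :
    G →g strongProd G (completeGraph (Fin n)) where
  toFun a := (a, j)
  map_rel' := fun {a b} hab =>
    ⟨fun he => hab.ne (congrArg Prod.fst he), Or.inr hab, Or.inl rfl⟩

private lemma sp_exists_walk {u v : V} (W : G.Walk u v) (hne : u ≠ v) (i j : Fin n) :
    ∃ W' : (strongProd G (completeGraph (Fin n))).Walk (u, i) (v, j),
      W'.length = W.length := by
  cases W with
  | nil => exact absurd rfl hne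
  | @cons _ b _ h W =>
    have hcoe : ∀ a, homSnd G n j a = (a, j) := fun a => rfl
    have hadj : (strongProd G (completeGraph (Fin n))).Adj (u, i) (b, j) := by
      refine ⟨fun he => h.ne (congrArg Prod.fst he), Or.inr h, ?_⟩
      rcases eq_or_ne i j with hij | hij
      · exact Or.inl hij
      · exact Or.inr hij
    exact ⟨SimpleGraph.Walk.cons hadj ((W.map (homSnd G n j)).copy (hcoe b) (hcoe v)),
      by simp⟩

private lemma sp_dist_ne (hG : G.Connected) {x y : V × Fin n} (hne : x.1 ≠ y.1) :
    (strongProd G (completeGraph (Fin n))).dist x y = G.dist x.1 y.1 := by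
  obtain ⟨u, i⟩ := x
  obtain ⟨v, j⟩ := y
  simp only at hne ⊢
  obtain ⟨W, hW⟩ := (hG.preconnected u v).exists_walk_length_eq_dist
  obtain ⟨W', hW'⟩ := sp_exists_walk W hne i j
  refine le_antisymm ((SimpleGraph.dist_le W').trans_eq (by rw [hW', hW])) ?_
  obtain ⟨W'', hW''⟩ :=
    (SimpleGraph.Reachable.exists_walk_length_eq_dist ⟨W'⟩ :
      ∃ W'' : (strongProd G (completeGraph (Fin n))).Walk (u, i) (v, j),
        W''.length = _)
  exact le_of_le_of_eq (sp_walk_dist_le hG W'') hW''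

private lemma sp_dist_fiber {x y : V × Fin n} (h1 : x.1 = y.1) (hne : x ≠ y) :
    (strongProd G (completeGraph (Fin n))).dist x y = 1 :=
  SimpleGraph.dist_eq_one_iff_adj.mpr
    ⟨hne, Or.inl h1, Or.inr fun h => hne (Prod.ext h1 h)⟩

end Aux

theorem gp_strongProd_complete [Fintype V] (G : SimpleGraph V)
    (hG : G.Connected) (n : ℕ) (hn : 1 ≤ n) :
    gpNum (strongProd G (completeGraph (Fin n))) = n * gpNum G := by
  classical
  have hbddG : BddAbove {m | ∃ S : Finset V, IsGPSet G ↑S ∧ S.card = m} := by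
    refine ⟨Fintype.card V, ?_⟩
    rintro m ⟨S, -, rfl⟩
    exact S.card_le_univ.trans_eq Finset.card_univ
  have hbddP : BddAbove {m | ∃ S : Finset (V × Fin n),
      IsGPSet (strongProd G (completeGraph (Fin n))) ↑S ∧ S.card = m} := by
    refine ⟨Fintype.card (V × Fin n), ?_⟩
    rintro m ⟨S, -, rfl⟩
    exact S.card_le_univ.trans_eq Finset.card_univ
  have hneG : {m | ∃ S : Finset V, IsGPSet G ↑S ∧ S.card = m}.Nonempty :=
    ⟨0, ∅, by intro u hu; simp at hu, Finset.card_empty⟩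
  have hneP : {m | ∃ S : Finset (V × Fin n),
      IsGPSet (strongProd G (completeGraph (Fin n))) ↑S ∧ S.card = m}.Nonempty :=
    ⟨0, ∅, by intro u hu; simp at hu, Finset.card_empty⟩
  obtain ⟨S, hS, hScard⟩ := Nat.sSup_mem hneG hbddG
  obtain ⟨T, hT, hTcard⟩ := Nat.sSup_mem hneP hbddP
  refine le_antisymm ?_ ?_
  · -- gpNum P ≤ n * gpNum G
    set S₀ : Finset V := T.image Prod.fst with hS₀
    have hproj : IsGPSet G ↑S₀ := by
      intro u hu v hv w hw huv hvw huw hc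
      obtain ⟨hreach, hdist⟩ := hc
      simp only [hS₀, Finset.coe_image, Set.mem_image, Finset.mem_coe] at hu hv hw
      obtain ⟨x, hxT, rfl⟩ := hu
      obtain ⟨y, hyT, rfl⟩ := hv
      obtain ⟨z, hzT, rfl⟩ := hw
      obtain ⟨W, -⟩ := (hG.preconnected x.1 z.1).exists_walk_length_eq_dist
      obtain ⟨W', -⟩ := sp_exists_walk W huw x.2 z.2
      refine hT x hxT y hyT z hzT (fun h => huv (congrArg Prod.fst h))
        (fun h => hvw (congrArg Prod.fst h)) (fun h => huw (congrArg Prod.fst h)) ?_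
      refine ⟨?_, ?_⟩
      · exact ⟨(W'.copy (by simp) (by simp) : _)⟩
      · rw [sp_dist_ne hG huv, sp_dist_ne hG hvw, sp_dist_ne hG huw]
        exact hdist
    have h1 : S₀.card ≤ gpNum G := le_csSup hbddG ⟨S₀, hproj, rfl⟩
    have h2 : T ⊆ S₀ ×ˢ (Finset.univ : Finset (Fin n)) := by
      intro x hx
      rw [Finset.mem_product]
      exact ⟨Finset.mem_image_of_mem _ hx, Finset.mem_univ _⟩
    calc gpNum (strongProd G (completeGraph (Fin n))) = T.card := hTcard.symm
      _ ≤ (S₀ ×ˢ (Finset.univ : Finset (Fin n))).card := Finset.card_le_card h2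
      _ = S₀.card * n := by rw [Finset.card_product, Finset.card_univ, Fintype.card_fin]
      _ ≤ gpNum G * n := Nat.mul_le_mul_right n h1
      _ = n * gpNum G := Nat.mul_comm _ _
  · -- n * gpNum G ≤ gpNum P
    set T₀ : Finset (V × Fin n) := S ×ˢ (Finset.univ : Finset (Fin n)) with hT₀
    have hTgp : IsGPSet (strongProd G (completeGraph (Fin n))) ↑T₀ := by
      intro x hx y hy z hz hxy hyz hxz hc
      obtain ⟨hre, hd⟩ := hc
      simp only [hT₀, Finset.coe_product, Set.mem_prod, Finset.mem_coe] at hx hy hz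
      have hxS := hx.1
      have hyS := hy.1
      have hzS := hz.1
      rcases eq_or_ne x.1 y.1 with h1 | h1 <;> rcases eq_or_ne y.1 z.1 with h2 | h2
      · -- all in same fiber
        rw [sp_dist_fiber h1 hxy, sp_dist_fiber h2 hyz,
            sp_dist_fiber (h1.trans h2) hxz] at hd
        omega
      · -- x.1 = y.1 ≠ z.1
        have h3 : x.1 ≠ z.1 := h1 ▸ h2
        rw [sp_dist_fiber h1 hxy, sp_dist_ne hG h2, sp_dist_ne hG h3, h1] at hd
        omega
      · -- x.1 ≠ y.1 = z.1
        have h3 : x.1 ≠ z.1 := h2 ▸ h1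
        rw [sp_dist_ne hG h1, sp_dist_fiber h2 hyz, sp_dist_ne hG h3, h2] at hd
        omega
      · rcases eq_or_ne x.1 z.1 with h3 | h3
        · rw [sp_dist_ne hG h1, sp_dist_ne hG h2, sp_dist_fiber h3 hxz] at hd
          have p1 := hG.pos_dist_of_ne h1
          have p2 := hG.pos_dist_of_ne h2
          omega
        · rw [sp_dist_ne hG h1, sp_dist_ne hG h2, sp_dist_ne hG h3] at hd
          exact hS x.1 hxS y.1 hyS z.1 hzS h1 h2 h3 ⟨hG.preconnected _ _, hd⟩
    have hcard : T₀.card = n * gpNum G := by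
      rw [hT₀, Finset.card_product, Finset.card_univ, Fintype.card_fin, hScard,
        Nat.mul_comm]
      rfl
    rw [← hcard]
    exact le_csSup hbddP ⟨T₀, hTgp, rfl⟩
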